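/- arXiv:math/0611266 — 5 statements merged into one kernel-verified Lean document; each statement's English description precedes it below -/
import Mathlib

section
/- (Hommel-type bound) Let p̂₁,…,p̂ₜ be random variables on a common probability space such that P(p̂ᵢ ≤ u) ≤ u for every i and every u ∈ (0,1). Let p̂₍₁₎ ≤ ⋯ ≤ p̂₍ₜ₎ denote their order statistics, and let 0 = β₀ ≤ β₁ ≤ ⋯ ≤ βₘ ≤ 1 with m ≤ t. Then P(⋃_{i=1}^{m} {p̂₍ᵢ₎ ≤ βᵢ}) ≤ t · Σ_{i=1}^{m} (βᵢ - βᵢ₋₁)/i. -/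
open MeasureTheory Finset
open scoped Classical

/-- `orderStat p k` is the `k`-th smallest value (1-indexed) among `p 0, …, p (n-1)`. -/
noncomputable def orderStat {n : ℕ} (p : Fin n → ℝ) (k : ℕ) : ℝ :=
  if h : k - 1 < n then p (Tuple.sort p ⟨k - 1, h⟩) else 0

/-!
Let `N i = #{j | p̂ⱼ ≤ βᵢ}`, a nondecreasing function of `i` with `N 0 = 0` almost surely (its mean
is at most `t β₀ = 0`). If `p̂₍ₖ₎ ≤ βₖ` then `N k ≥ k`, hence
`1 ≤ N k / k ≤ ∑_{i ≤ k} (N i - N (i-1)) / i ≤ ∑_{i ≤ m} (N i - N (i-1)) / i`,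
so by Markov's inequality the union has probability at most the mean of the right-hand side.
Each `E (N i)` is at most `t βᵢ`, and since the weights `1/i` decrease, Abel summation makes
`∑ (aᵢ - aᵢ₋₁) / i` monotone in the sequence `a` (with `a 0` fixed).
-/

lemma div_le_sum_Icc_sub_div {d : ℕ → ℝ} (h0 : d 0 = 0) {m : ℕ} (hd : ∀ i ≤ m, 0 ≤ d i) :
    d m / m ≤ ∑ i ∈ Icc 1 m, (d i - d (i - 1)) / i := by
  induction m with
  | zero => simp [h0]
  | succ m ih =>
    have hdm : d m / (m + 1) ≤ d m / m := by
      rcases Nat.eq_zero_or_pos m with rfl | hm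
      · simp [h0]
      · gcongr
        exacts [hd m (by omega), by linarith]
    rw [sum_Icc_succ_top (by omega), Nat.add_sub_cancel]
    push_cast
    calc d (m + 1) / (m + 1) = d m / (m + 1) + (d (m + 1) - d m) / (m + 1) := by ring
      _ ≤ d m / m + (d (m + 1) - d m) / (m + 1) := by gcongr
      _ ≤ _ := by gcongr; exact ih fun i hi => hd i (by omega)

lemma sum_Icc_sub_div_nonneg {d : ℕ → ℝ} (h0 : d 0 = 0) {m : ℕ} (hd : ∀ i ≤ m, 0 ≤ d i) :
    0 ≤ ∑ i ∈ Icc 1 m, (d i - d (i - 1)) / i :=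
  (div_nonneg (hd m le_rfl) m.cast_nonneg).trans (div_le_sum_Icc_sub_div h0 hd)

lemma sum_Icc_sub_div_le_sum_Icc_sub_div {a b : ℕ → ℝ} (h0 : a 0 = b 0) {m : ℕ}
    (hab : ∀ i ≤ m, a i ≤ b i) :
    ∑ i ∈ Icc 1 m, (a i - a (i - 1)) / i ≤ ∑ i ∈ Icc 1 m, (b i - b (i - 1)) / i := by
  have := sum_Icc_sub_div_nonneg (d := b - a) (by simp [h0]) fun i hi => sub_nonneg.2 (hab i hi)
  rw [← sub_nonneg, ← sum_sub_distrib]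
  convert this using 2
  simp only [Pi.sub_apply]
  ring

lemma one_le_sum_Icc_sub_div {s : ℕ → ℝ} (h0 : s 0 = 0) {m : ℕ} (hs : MonotoneOn s (Set.Iic m))
    {k : ℕ} (hk : k ∈ Icc 1 m) (hks : (k : ℝ) ≤ s k) :
    1 ≤ ∑ i ∈ Icc 1 m, (s i - s (i - 1)) / i := by
  obtain ⟨hk1, hkm⟩ := mem_Icc.1 hk
  have hs_nonneg : ∀ i ≤ m, 0 ≤ s i := fun i hi =>
    h0 ▸ hs (Set.mem_Iic.2 (Nat.zero_le m)) (Set.mem_Iic.2 hi) (Nat.zero_le i)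
  have hterm : ∀ i ∈ Icc 1 m, 0 ≤ (s i - s (i - 1)) / i := fun i hi => by
    have him := (mem_Icc.1 hi).2
    have := hs (Set.mem_Iic.2 ((Nat.sub_le i 1).trans him)) (Set.mem_Iic.2 him) (Nat.sub_le i 1)
    exact div_nonneg (sub_nonneg.2 this) i.cast_nonneg
  calc (1 : ℝ) ≤ s k / k := by rw [le_div_iff₀ (by exact_mod_cast hk1)]; linarith
    _ ≤ ∑ i ∈ Icc 1 k, (s i - s (i - 1)) / i :=
      div_le_sum_Icc_sub_div h0 fun i hi => hs_nonneg i (hi.trans hkm)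
    _ ≤ ∑ i ∈ Icc 1 m, (s i - s (i - 1)) / i :=
      sum_le_sum_of_subset_of_nonneg (Icc_subset_Icc_right hkm) fun i hi _ => hterm i hi

lemma le_card_filter_of_orderStat_le {n : ℕ} (q : Fin n → ℝ) {k : ℕ} (hk1 : 1 ≤ k) (hkn : k ≤ n)
    {c : ℝ} (h : orderStat q k ≤ c) : k ≤ #{j | q j ≤ c} := by
  have hlt : k - 1 < n := by omega
  rw [orderStat, dif_pos hlt] at h
  calc k = #(univ : Finset (Fin k)) := by simp
    _ ≤ #{j | q j ≤ c} := by
      refine card_le_card_of_injOn (fun j => Tuple.sort q (Fin.castLE hkn j)) ?_ ?_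
      · intro j _
        simp only [coe_filter, mem_univ, true_and, Set.mem_ofPred_eq]
        refine le_trans (Tuple.monotone_sort q ?_) h
        simp only [Fin.le_def, Fin.val_castLE]
        omega
      · exact fun x _ y _ hxy => Fin.castLE_injective hkn ((Tuple.sort q).injective hxy)

lemma card_filter_le_eq_sum_indicator {Ω ι : Type*} [Fintype ι] {p : ι → Ω → ℝ} (c : ℝ) (ω : Ω) :
    (#{i | p i ω ≤ c} : ℝ) = ∑ i, {ω | p i ω ≤ c}.indicator 1 ω := by
  simp only [natCast_card_filter, Set.indicator_apply, Set.mem_ofPred_eq, Pi.one_apply]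

section Probability

variable {Ω : Type*} [MeasurableSpace Ω] {μ : Measure Ω}

lemma measureReal_setOf_le_le [IsProbabilityMeasure μ] {f : Ω → ℝ}
    (hp : ∀ u ∈ Set.Ioo (0 : ℝ) 1, μ {ω | f ω ≤ u} ≤ ENNReal.ofReal u) {c : ℝ} (hc : 0 ≤ c) :
    μ.real {ω | f ω ≤ c} ≤ c := by
  refine le_of_forall_gt_imp_ge_of_dense fun a hca => ?_
  rcases lt_or_ge a 1 with ha | ha
  · calc μ.real {ω | f ω ≤ c} ≤ μ.real {ω | f ω ≤ a} :=
          measureReal_mono fun ω hω => le_trans hω hca.le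
      _ ≤ a := ENNReal.toReal_le_of_le_ofReal (by linarith) (hp a ⟨by linarith, ha⟩)
  · exact measureReal_le_one.trans ha

variable {ι : Type*} [Fintype ι] {p : ι → Ω → ℝ}

lemma integrable_card_filter_le [IsFiniteMeasure μ] (hmeas : ∀ i, Measurable (p i)) (c : ℝ) :
    Integrable (fun ω => (#{i | p i ω ≤ c} : ℝ)) μ := by
  simp_rw [card_filter_le_eq_sum_indicator]
  exact integrable_finsetSum _ fun i _ =>
    (integrable_const 1).indicator (measurableSet_le (hmeas i) measurable_const)

lemma integral_card_filter_le_le [IsProbabilityMeasure μ] (hmeas : ∀ i, Measurable (p i))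
    (hp : ∀ i, ∀ u ∈ Set.Ioo (0 : ℝ) 1, μ {ω | p i ω ≤ u} ≤ ENNReal.ofReal u) {c : ℝ}
    (hc : 0 ≤ c) : ∫ ω, (#{i | p i ω ≤ c} : ℝ) ∂μ ≤ Fintype.card ι * c := by
  have hset : ∀ i, MeasurableSet {ω | p i ω ≤ c} := fun i =>
    measurableSet_le (hmeas i) measurable_const
  simp_rw [card_filter_le_eq_sum_indicator]
  rw [integral_finsetSum _ fun i _ => (integrable_const 1).indicator (hset i)]
  simp_rw [integral_indicator_one (hset _)]
  simpa using sum_le_sum fun i (_ : i ∈ univ) => measureReal_setOf_le_le (hp i) hc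

lemma measureReal_exists_le_le_sum [IsFiniteMeasure μ] {S : ℕ → Ω → ℝ} {m : ℕ}
    (hint : ∀ i ≤ m, Integrable (S i) μ) (h0 : ∀ᵐ ω ∂μ, S 0 ω = 0)
    (hmono : ∀ ω, MonotoneOn (S · ω) (Set.Iic m)) :
    μ.real {ω | ∃ k ∈ Icc 1 m, (k : ℝ) ≤ S k ω} ≤
      ∑ i ∈ Icc 1 m, (∫ ω, S i ω ∂μ - ∫ ω, S (i - 1) ω ∂μ) / i := by
  have hint_term : ∀ i ∈ Icc 1 m, Integrable (fun ω => (S i ω - S (i - 1) ω) / i) μ := fun i hi =>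
    have him := (mem_Icc.1 hi).2
    ((hint i him).sub (hint (i - 1) ((Nat.sub_le i 1).trans him))).div_const _
  set g : Ω → ℝ := fun ω => ∑ i ∈ Icc 1 m, (S i ω - S (i - 1) ω) / i
  have hg_nonneg : 0 ≤ᵐ[μ] g := h0.mono fun ω hω =>
    sum_Icc_sub_div_nonneg (d := (S · ω)) hω fun i hi =>
      hω ▸ hmono ω (Set.mem_Iic.2 (Nat.zero_le m)) (Set.mem_Iic.2 hi) (Nat.zero_le i)
  have hsub : {ω | ∃ k ∈ Icc 1 m, (k : ℝ) ≤ S k ω} ≤ᵐ[μ] {ω | 1 ≤ g ω} :=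
    h0.mono fun ω hω ⟨k, hk, hks⟩ => one_le_sum_Icc_sub_div (s := (S · ω)) hω (hmono ω) hk hks
  calc μ.real {ω | ∃ k ∈ Icc 1 m, (k : ℝ) ≤ S k ω} ≤ 1 * μ.real {ω | 1 ≤ g ω} := by
        rw [one_mul]
        exact ENNReal.toReal_mono (measure_ne_top _ _) (measure_mono_ae hsub)
    _ ≤ ∫ ω, g ω ∂μ :=
        mul_meas_ge_le_integral_of_nonneg hg_nonneg (integrable_finsetSum _ hint_term) 1
    _ = _ := by
        rw [integral_finsetSum _ hint_term]
        refine sum_congr rfl fun i hi => ?_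
        have him := (mem_Icc.1 hi).2
        rw [integral_div, integral_sub (hint i him) (hint (i - 1) ((Nat.sub_le i 1).trans him))]

end Probability

theorem stmt4_general {Ω : Type*} [MeasurableSpace Ω] (μ : Measure Ω) [IsProbabilityMeasure μ]
    {t m : ℕ} (hm : m ≤ t) (p : Fin t → Ω → ℝ) (hmeas : ∀ i, Measurable (p i))
    (hp : ∀ i, ∀ u ∈ Set.Ioo (0 : ℝ) 1, μ {ω | p i ω ≤ u} ≤ ENNReal.ofReal u)
    (β : ℕ → ℝ) (hβ0 : β 0 = 0) (hβmono : ∀ i j, i ≤ j → j ≤ m → β i ≤ β j) :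
    (μ {ω | ∃ i ∈ Finset.Icc 1 m, orderStat (fun j => p j ω) i ≤ β i}).toReal ≤
      t * ∑ i ∈ Finset.Icc 1 m, (β i - β (i - 1)) / i := by
  set N : ℕ → Ω → ℝ := fun i ω => #{j | p j ω ≤ β i}
  have hN_int : ∀ i, Integrable (N i) μ := fun i => integrable_card_filter_le hmeas (β i)
  have hN_le : ∀ i ≤ m, ∫ ω, N i ω ∂μ ≤ t * β i := fun i hi => by
    simpa using integral_card_filter_le_le hmeas hp (hβ0 ▸ hβmono 0 i i.zero_le hi)
  have hN0 : N 0 =ᵐ[μ] 0 := by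
    refine (integral_eq_zero_iff_of_nonneg (fun ω => by positivity) (hN_int 0)).1 ?_
    exact le_antisymm (by simpa [hβ0] using hN_le 0 m.zero_le)
      (integral_nonneg fun ω => by positivity)
  have hN_mono : ∀ ω, MonotoneOn (N · ω) (Set.Iic m) := fun ω i _ j hj hij => by
    simp only [N, Nat.cast_le]
    exact card_le_card (monotone_filter_right univ fun k _ hk => hk.trans (hβmono i j hij hj))
  calc μ.real {ω | ∃ i ∈ Icc 1 m, orderStat (fun j => p j ω) i ≤ β i}
      ≤ μ.real {ω | ∃ k ∈ Icc 1 m, (k : ℝ) ≤ N k ω} := by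
        refine measureReal_mono fun ω ⟨k, hk, hle⟩ => ⟨k, hk, ?_⟩
        simp only [N]
        exact_mod_cast le_card_filter_of_orderStat_le _ (mem_Icc.1 hk).1
          ((mem_Icc.1 hk).2.trans hm) hle
    _ ≤ ∑ i ∈ Icc 1 m, (∫ ω, N i ω ∂μ - ∫ ω, N (i - 1) ω ∂μ) / i :=
        measureReal_exists_le_le_sum (fun i _ => hN_int i) hN0 hN_mono
    _ ≤ ∑ i ∈ Icc 1 m, (t * β i - t * β (i - 1)) / i :=
        sum_Icc_sub_div_le_sum_Icc_sub_div (by simp [integral_congr_ae hN0, hβ0]) hN_le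
    _ = t * ∑ i ∈ Icc 1 m, (β i - β (i - 1)) / i := by
        rw [mul_sum]
        exact sum_congr rfl fun i _ => by ring

/-- Hommel-type bound (Lemma 3.2(i)): if each `p i` is a marginal p-value, then
`P(⋃_{i=1}^m {p_(i) ≤ β i}) ≤ t · ∑_{i=1}^m (β i - β (i-1))/i`. -/
theorem stmt4 {Ω : Type*} [MeasurableSpace Ω] (μ : Measure Ω) [IsProbabilityMeasure μ]
    {t m : ℕ} (hm : m ≤ t) (p : Fin t → Ω → ℝ) (hmeas : ∀ i, Measurable (p i))
    (hval : ∀ i, ∀ᵐ ω ∂μ, p i ω ∈ Set.Icc (0 : ℝ) 1)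
    (hp : ∀ i, ∀ u ∈ Set.Ioo (0 : ℝ) 1, μ {ω | p i ω ≤ u} ≤ ENNReal.ofReal u)
    (β : ℕ → ℝ) (hβ0 : β 0 = 0) (hβmono : ∀ i j, i ≤ j → j ≤ m → β i ≤ β j)
    (hβ1 : β m ≤ 1) :
    (μ {ω | ∃ i ∈ Finset.Icc 1 m, orderStat (fun j => p j ω) i ≤ β i}).toReal ≤
      t * ∑ i ∈ Finset.Icc 1 m, (β i - β (i - 1)) / i :=
  stmt4_general μ hm p hmeas hp β hβ0 hβmono
end

section
/- Special case of the Hommel bound with equal constants: if p̂₁,…,p̂ₜ satisfy P(p̂ᵢ ≤ u) ≤ u for all u ∈ (0,1), then for any β ∈ (0,1) and any k with 1 ≤ k ≤ t, P(p̂₍ₖ₎ ≤ β) ≤ tβ/k, where p̂₍ₖ₎ is the k-th smallest of the p̂ᵢ. -/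
open MeasureTheory Finset
open scoped Classical ENNReal

/-- If the `k`-th order statistic is `≤ β`, then at least `k` of the values are `≤ β`. -/
lemma card_le_of_orderStat_le {n : ℕ} (f : Fin n → ℝ) {k : ℕ} (hk1 : 1 ≤ k) (hkn : k ≤ n)
    {β : ℝ} (h : orderStat f k ≤ β) :
    k ≤ (Finset.univ.filter (fun i => f i ≤ β)).card := by
  have hlt : k - 1 < n := lt_of_lt_of_le (Nat.sub_lt hk1 one_pos) hkn
  rw [orderStat, dif_pos hlt] at h
  have hinj : Function.Injective (fun i : Fin k => Tuple.sort f (Fin.castLE hkn i)) := by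
    intro a b hab
    have := (Tuple.sort f).injective hab
    exact Fin.castLE_injective hkn this
  calc k = (Finset.univ : Finset (Fin k)).card := by simp
    _ = (Finset.univ.image (fun i : Fin k => Tuple.sort f (Fin.castLE hkn i))).card := by
        rw [Finset.card_image_of_injective _ hinj]
    _ ≤ (Finset.univ.filter (fun i => f i ≤ β)).card := by
        apply Finset.card_le_card
        intro j hj
        simp only [Finset.mem_image, Finset.mem_univ, true_and] at hj
        obtain ⟨i, rfl⟩ := hj
        simp only [Finset.mem_filter, Finset.mem_univ, true_and]
        refine le_trans ?_ h
        have : (Fin.castLE hkn i : Fin n) ≤ ⟨k - 1, hlt⟩ := by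
          simp [Fin.le_def]
          omega
        exact Tuple.monotone_sort f this

/-- Special case of the Hommel bound with equal constants:
`P(p_(k) ≤ β) ≤ t·β/k`. -/
theorem stmt5 {Ω : Type*} [MeasurableSpace Ω] (μ : Measure Ω) [IsProbabilityMeasure μ]
    {t : ℕ} (p : Fin t → Ω → ℝ) (hmeas : ∀ i, Measurable (p i))
    (hval : ∀ i, ∀ᵐ ω ∂μ, p i ω ∈ Set.Icc (0 : ℝ) 1)
    (hp : ∀ i, ∀ u ∈ Set.Ioo (0 : ℝ) 1, μ {ω | p i ω ≤ u} ≤ ENNReal.ofReal u)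
    (β : ℝ) (hβ : β ∈ Set.Ioo (0 : ℝ) 1) (k : ℕ) (hk1 : 1 ≤ k) (hkt : k ≤ t) :
    (μ {ω | orderStat (fun j => p j ω) k ≤ β}).toReal ≤ t * β / k := by
  set s : Fin t → Set Ω := fun i => {ω | p i ω ≤ β} with hs
  have hsm : ∀ i, MeasurableSet (s i) := fun i => measurableSet_le (hmeas i) measurable_const
  set g : Ω → ℝ≥0∞ := fun ω => ∑ i, Set.indicator (s i) (fun _ => (1 : ℝ≥0∞)) ω with hg
  have hgm : Measurable g := by
    apply Finset.measurable_sum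
    intro i _
    exact measurable_const.indicator (hsm i)
  have hgcard : ∀ ω, g ω = ((Finset.univ.filter (fun i => p i ω ≤ β)).card : ℝ≥0∞) := by
    intro ω
    simp only [hg]
    rw [Finset.card_filter, Nat.cast_sum]
    apply Finset.sum_congr rfl
    intro i _
    by_cases h : p i ω ≤ β
    · rw [Set.indicator_of_mem (by exact h)]; simp [h]
    · rw [Set.indicator_of_notMem (by exact h)]; simp [h]
  -- the event is contained in {ω | k ≤ g ω}
  have hsub : {ω | orderStat (fun j => p j ω) k ≤ β} ⊆ {ω | (k : ℝ≥0∞) ≤ g ω} := by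
    intro ω hω
    rw [Set.mem_setOf_eq, hgcard ω]
    exact_mod_cast card_le_of_orderStat_le (fun j => p j ω) hk1 hkt hω
  have hint : ∫⁻ ω, g ω ∂μ = ∑ i, μ (s i) := by
    rw [lintegral_finset_sum _ (fun i _ => measurable_const.indicator (hsm i))]
    exact Finset.sum_congr rfl fun i _ => lintegral_indicator_one (hsm i)
  have hsum : ∑ i, μ (s i) ≤ ENNReal.ofReal (t * β) := by
    calc ∑ i, μ (s i) ≤ ∑ _i : Fin t, ENNReal.ofReal β :=
          Finset.sum_le_sum fun i _ => hp i β hβ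
      _ = t * ENNReal.ofReal β := by simp [mul_comm]
      _ = ENNReal.ofReal (t * β) := by
          rw [ENNReal.ofReal_mul (by positivity)]
          simp
  have hmain : (k : ℝ≥0∞) * μ {ω | orderStat (fun j => p j ω) k ≤ β} ≤
      ENNReal.ofReal (t * β) := by
    calc (k : ℝ≥0∞) * μ {ω | orderStat (fun j => p j ω) k ≤ β}
        ≤ (k : ℝ≥0∞) * μ {ω | (k : ℝ≥0∞) ≤ g ω} := by
          exact mul_le_mul_right (measure_mono hsub) _
      _ ≤ ∫⁻ ω, g ω ∂μ := mul_meas_ge_le_lintegral₀ hgm.aemeasurable _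
      _ = ∑ i, μ (s i) := hint
      _ ≤ ENNReal.ofReal (t * β) := hsum
  have hkpos : (0 : ℝ) < k := by exact_mod_cast hk1
  have hreal : (k : ℝ) * (μ {ω | orderStat (fun j => p j ω) k ≤ β}).toReal ≤ t * β := by
    have h0 : (0:ℝ) ≤ t * β := by
      have := hβ.1.le
      positivity
    have := ENNReal.toReal_le_of_le_ofReal h0 hmain
    rwa [ENNReal.toReal_mul, ENNReal.toReal_natCast] at this
  rw [div_eq_mul_inv, mul_comm (↑t * β), ← div_eq_inv_mul, le_div_iff₀ hkpos, mul_comm]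
  exact hreal
end

section
/- (Lemma 3.1) Consider a stepup procedure with constants α₁ ≤ ⋯ ≤ α_s applied to p-values p̂₁,…,p̂_s, where the set I of true hypotheses has size |I| ≥ k, and q̂₍₁₎ ≤ ⋯ ≤ q̂₍|I|₎ are the ordered p-values of true hypotheses. Then the event that the procedure rejects at least k true hypotheses is contained in the event ⋃_{j=k}^{|I|} {q̂₍ⱼ₎ ≤ α_{s-|I|+j}}. In particular, the k-FWER is at most P(⋃_{j=k}^{|I|} {q̂₍ⱼ₎ ≤ α_{s-|I|+j}}). -/
open MeasureTheory Finset
open scoped Classical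

/-- The number of rejections of the stepup procedure with critical values
`c 1 ≤ … ≤ c n` (1-indexed): the largest `j` with `p_(j) ≤ c j` (0 if none). -/
noncomputable def numReject {n : ℕ} (c : ℕ → ℝ) (p : Fin n → ℝ) : ℕ :=
  ((Finset.Icc 1 n).filter (fun j => orderStat p j ≤ c j)).sup id

/-- The indices rejected by the stepup procedure: those carrying the
`numReject c p` smallest p-values (via the sorting permutation). -/
noncomputable def rejectedSet {n : ℕ} (c : ℕ → ℝ) (p : Fin n → ℝ) : Finset (Fin n) :=
  (Finset.univ.filter (fun j : Fin n => (j : ℕ) + 1 ≤ numReject c p)).image (Tuple.sort p)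

/-- The `k`-th smallest (1-indexed) of the p-values with indices in `I`. -/
noncomputable def trueOrderStat {n : ℕ} (I : Finset (Fin n)) (p : Fin n → ℝ) (k : ℕ) : ℝ :=
  orderStat (fun j : Fin I.card => p (I.orderIsoOfFin rfl j).1) k

variable {n : ℕ}

lemma orderStat_le_of_le_card_filter (p : Fin n → ℝ) {t : ℝ} {j : ℕ} (hj : 1 ≤ j)
    (h : j ≤ #{i | p i ≤ t}) : orderStat p j ≤ t := by
  have hjn : j - 1 < n := by
    have := card_filter_le univ (fun i => p i ≤ t)
    rw [card_univ, Fintype.card_fin] at this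
    omega
  rw [orderStat, dif_pos hjn]
  refine (Tuple.lt_card_le_iff_apply_le_of_monotone (j := ⟨j - 1, hjn⟩)
    (Tuple.monotone_sort p)).mp ?_
  have hsort : #{i | p (Tuple.sort p i) ≤ t} = #{i | p i ≤ t} := by
    simp only [← Fintype.card_subtype]
    exact Fintype.card_congr ((Tuple.sort p).subtypeEquiv fun _ => Iff.rfl)
  simp only [Function.comp_apply, hsort]
  omega

lemma card_filter_orderIsoOfFin (I : Finset (Fin n)) (p : Fin n → ℝ) (t : ℝ) :
    #{a : Fin I.card | p (I.orderIsoOfFin rfl a) ≤ t} = #{i ∈ I | p i ≤ t} := by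
  refine card_bij (fun a _ => (I.orderIsoOfFin rfl a).1) ?_ ?_ ?_
  · intro a ha
    exact mem_filter.2 ⟨(I.orderIsoOfFin rfl a).2, (mem_filter.1 ha).2⟩
  · intro a _ b _ hab
    exact (I.orderIsoOfFin rfl).injective (Subtype.ext hab)
  · intro i hi
    obtain ⟨hiI, hit⟩ := mem_filter.1 hi
    exact ⟨(I.orderIsoOfFin rfl).symm ⟨i, hiI⟩, mem_filter.2 ⟨mem_univ _, by simpa using hit⟩,
      by simp⟩

lemma trueOrderStat_le_of_le_card_filter (I : Finset (Fin n)) (p : Fin n → ℝ) {t : ℝ}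
    {j : ℕ} (hj : 1 ≤ j) (h : j ≤ #{i ∈ I | p i ≤ t}) : trueOrderStat I p j ≤ t :=
  orderStat_le_of_le_card_filter _ hj (card_filter_orderIsoOfFin I p t ▸ h)

lemma numReject_le (c : ℕ → ℝ) (p : Fin n → ℝ) : numReject c p ≤ n :=
  Finset.sup_le fun _ hj => (mem_Icc.1 (mem_filter.1 hj).1).2

lemma orderStat_numReject_le {c : ℕ → ℝ} {p : Fin n → ℝ} (h : 1 ≤ numReject c p) :
    orderStat p (numReject c p) ≤ c (numReject c p) := by
  obtain ⟨j, hj, -⟩ := Finset.lt_sup_iff.1 (Nat.lt_of_succ_le h)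
  obtain ⟨i, hi, hsup⟩ := exists_mem_eq_sup _ ⟨j, hj⟩ id
  rw [numReject, hsup]
  exact (mem_filter.1 hi).2

lemma card_rejectedSet (c : ℕ → ℝ) (p : Fin n → ℝ) :
    #(rejectedSet c p) = numReject c p := by
  rw [rejectedSet, card_image_of_injective _ (Tuple.sort p).injective]
  simp only [Nat.add_one_le_iff]
  rw [← Fintype.card_subtype, Fintype.card_fin_lt_of_le (numReject_le c p)]

lemma le_orderStat_numReject_of_mem_rejectedSet {c : ℕ → ℝ} {p : Fin n → ℝ} {i : Fin n}
    (hi : i ∈ rejectedSet c p) : p i ≤ orderStat p (numReject c p) := by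
  obtain ⟨a, ha, rfl⟩ := mem_image.1 hi
  have ha : (a : ℕ) + 1 ≤ numReject c p := (mem_filter.1 ha).2
  have hr : numReject c p - 1 < n := by have := numReject_le c p; omega
  rw [orderStat, dif_pos hr]
  exact Tuple.monotone_sort p (Fin.le_def.2 (by simp only; omega))

lemma card_le_card_compl_add_card_inter {α : Type*} [Fintype α] [DecidableEq α] (R I : Finset α) :
    #R ≤ Fintype.card α - #I + #(R ∩ I) := by
  have hsdiff : #(R \ I) ≤ #Iᶜ := card_le_card fun x hx => mem_compl.2 (mem_sdiff.1 hx).2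
  rw [card_compl] at hsdiff
  have := card_inter_add_card_sdiff R I
  omega

/-- With `j` true hypotheses among the `r` rejections, the `j` smallest true p-values are all
at most `p_(r) ≤ c r`, and `r ≤ (s - |I|) + j` because at most `s - |I|` rejections are false
hypotheses. -/
theorem trueOrderStat_card_rejectedSet_inter_le {c : ℕ → ℝ} (hc : MonotoneOn c (Set.Icc 1 n))
    (p : Fin n → ℝ) (I : Finset (Fin n)) (hj : 1 ≤ #(rejectedSet c p ∩ I)) :
    trueOrderStat I p #(rejectedSet c p ∩ I) ≤ c (n - #I + #(rejectedSet c p ∩ I)) := by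
  set R := rejectedSet c p
  set r := numReject c p
  have hr : 1 ≤ r := by
    have := card_le_card (inter_subset_left : R ∩ I ⊆ R)
    rw [card_rejectedSet] at this
    omega
  have hr_le : r ≤ n - #I + #(R ∩ I) := by
    simpa [R, card_rejectedSet] using card_le_card_compl_add_card_inter R I
  have hIn : #I ≤ n := by simpa using card_le_univ I
  have hjI : #(R ∩ I) ≤ #I := card_le_card inter_subset_right
  have hRI : R ∩ I ⊆ {i ∈ I | p i ≤ orderStat p r} := fun i hi =>
    mem_filter.2 ⟨(mem_inter.1 hi).2,
      le_orderStat_numReject_of_mem_rejectedSet (mem_inter.1 hi).1⟩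
  calc trueOrderStat I p #(R ∩ I) ≤ orderStat p r :=
        trueOrderStat_le_of_le_card_filter I p hj (card_le_card hRI)
    _ ≤ c r := orderStat_numReject_le hr
    _ ≤ c (n - #I + #(R ∩ I)) :=
        hc ⟨hr, numReject_le c p⟩ ⟨by omega, by omega⟩ hr_le

theorem stmt6_general {Ω : Type*} [MeasurableSpace Ω] (μ : Measure Ω)
    {s : ℕ} (p : Fin s → Ω → ℝ) (I : Finset (Fin s)) (k : ℕ)
    (hk1 : 1 ≤ k)
    (c : ℕ → ℝ) (hc : ∀ i j, 1 ≤ i → i ≤ j → j ≤ s → c i ≤ c j) :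
    {ω | k ≤ (rejectedSet c (fun i => p i ω) ∩ I).card} ⊆
      {ω | ∃ j, k ≤ j ∧ j ≤ I.card ∧
        trueOrderStat I (fun i => p i ω) j ≤ c (s - I.card + j)} ∧
    μ {ω | k ≤ (rejectedSet c (fun i => p i ω) ∩ I).card} ≤
      μ {ω | ∃ j, k ≤ j ∧ j ≤ I.card ∧
        trueOrderStat I (fun i => p i ω) j ≤ c (s - I.card + j)} := by
  have hc' : MonotoneOn c (Set.Icc 1 s) := fun i hi j hj hij => hc i j hi.1 hij hj.2
  have hsub : {ω | k ≤ (rejectedSet c (fun i => p i ω) ∩ I).card} ⊆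
      {ω | ∃ j, k ≤ j ∧ j ≤ I.card ∧
        trueOrderStat I (fun i => p i ω) j ≤ c (s - I.card + j)} := fun ω hω =>
    ⟨_, hω, card_le_card inter_subset_right,
      trueOrderStat_card_rejectedSet_inter_le hc' _ I (hk1.trans hω)⟩
  exact ⟨hsub, measure_mono hsub⟩

/-- Lemma 3.1: the event that the stepup procedure rejects at least `k` true
hypotheses is contained in `⋃_{j=k}^{|I|} {q_(j) ≤ α_{s-|I|+j}}`; in particular
the k-FWER is bounded by the probability of the latter event. -/
theorem stmt6 {Ω : Type*} [MeasurableSpace Ω] (μ : Measure Ω) [IsProbabilityMeasure μ]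
    {s : ℕ} (p : Fin s → Ω → ℝ) (I : Finset (Fin s)) (k : ℕ)
    (hk1 : 1 ≤ k) (hkI : k ≤ I.card)
    (c : ℕ → ℝ) (hc : ∀ i j, 1 ≤ i → i ≤ j → j ≤ s → c i ≤ c j) :
    {ω | k ≤ (rejectedSet c (fun i => p i ω) ∩ I).card} ⊆
      {ω | ∃ j, k ≤ j ∧ j ≤ I.card ∧
        trueOrderStat I (fun i => p i ω) j ≤ c (s - I.card + j)} ∧
    μ {ω | k ≤ (rejectedSet c (fun i => p i ω) ∩ I).card} ≤
      μ {ω | ∃ j, k ≤ j ∧ j ≤ I.card ∧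
        trueOrderStat I (fun i => p i ω) j ≤ c (s - I.card + j)} :=
  stmt6_general μ p I k hk1 c hc
end

section
/- (Lemma 4.1, probabilistic form) Consider a stepup procedure with constants α₁ ≤ ⋯ ≤ α_s, true-hypothesis index set I, ordered true p-values q̂₍₁₎ ≤ ⋯ ≤ q̂₍|I|₎, and m(j) = ⌊γj⌋ + 1 for γ ∈ [0,1). Then P(FDP > γ) ≤ P(⋃ {q̂₍ₖ∨m(s-|I|+k)₎ ≤ α_{s-|I|+k}}), where the union is over integers k with |I|-s+1 ≤ k ≤ |I| and |I| ≥ m(s-|I|+k), and x∨y denotes max(x,y). -/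
open MeasureTheory Finset
open scoped Classical

/-- The false discovery proportion of the stepup procedure: number of rejected
true hypotheses divided by the total number of rejections (0 if no rejections). -/
noncomputable def FDP {n : ℕ} (I : Finset (Fin n)) (c : ℕ → ℝ) (p : Fin n → ℝ) : ℝ :=
  if numReject c p = 0 then 0
  else ((rejectedSet c p ∩ I).card : ℝ) / (numReject c p : ℝ)

/-- If at least `k` of the values are `≤ t`, then the `k`-th order statistic is `≤ t`. -/
lemma orderStat_le_of_card {n : ℕ} (p : Fin n → ℝ) (t : ℝ) (k : ℕ) (hk : 1 ≤ k)
    (h : k ≤ (Finset.univ.filter (fun i => p i ≤ t)).card) : orderStat p k ≤ t := by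
  set A := Finset.univ.filter (fun i => p i ≤ t) with hA
  have hAn : A.card ≤ n := by simpa using Finset.card_le_card (Finset.subset_univ A)
  have hkn : k - 1 < n := by omega
  rw [orderStat, dif_pos hkn]
  set σ := Tuple.sort p with hσ
  set B := A.image σ.symm with hB
  have hBcard : B.card = A.card := Finset.card_image_of_injective _ σ.symm.injective
  -- there is some j ∈ B with k - 1 ≤ j
  have hex : ∃ j ∈ B, k - 1 ≤ (j : ℕ) := by
    by_contra hcon
    push_neg at hcon
    have hsub : B.image Fin.val ⊆ Finset.range (k - 1) := by
      intro m hm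
      simp only [Finset.mem_image] at hm
      obtain ⟨j, hj, rfl⟩ := hm
      exact Finset.mem_range.mpr (hcon j hj)
    have := Finset.card_le_card hsub
    rw [Finset.card_image_of_injective _ Fin.val_injective, hBcard, Finset.card_range] at this
    omega
  obtain ⟨j, hjB, hjk⟩ := hex
  have hσj : σ j ∈ A := by
    simp only [hB, Finset.mem_image] at hjB
    obtain ⟨i, hi, rfl⟩ := hjB
    simpa using hi
  have hpt : p (σ j) ≤ t := by
    simp only [hA, Finset.mem_filter] at hσj
    exact hσj.2
  have hmono := Tuple.monotone_sort p (a := ⟨k - 1, hkn⟩) (b := j) (by exact hjk)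
  exact le_trans hmono hpt

/-- Lemma 4.1: `P(FDP > γ) ≤ P(⋃ {q_(k ∨ m(s-|I|+k)) ≤ α_{s-|I|+k}})`, the union
being over integers `k` with `|I|-s+1 ≤ k ≤ |I|` and `|I| ≥ m(s-|I|+k)`, where
`m(j) = ⌊γj⌋ + 1` (reparametrized by `j = s - |I| + k ∈ [1, s]`, with the
truncated subtraction `j + |I| - s` realizing `k` inside the max). -/
theorem stmt12 {Ω : Type*} [MeasurableSpace Ω] (μ : Measure Ω) [IsProbabilityMeasure μ]
    {s : ℕ} (p : Fin s → Ω → ℝ) (hmeas : ∀ i, Measurable (p i))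
    (I : Finset (Fin s)) (γ : ℝ) (hγ : γ ∈ Set.Ico (0 : ℝ) 1)
    (c : ℕ → ℝ) (hc : ∀ i j, 1 ≤ i → i ≤ j → j ≤ s → c i ≤ c j) :
    μ {ω | γ < FDP I c (fun i => p i ω)} ≤
      μ {ω | ∃ j ∈ Finset.Icc 1 s, Nat.floor (γ * (j : ℝ)) + 1 ≤ I.card ∧
        trueOrderStat I (fun i => p i ω)
          (max (j + I.card - s) (Nat.floor (γ * (j : ℝ)) + 1)) ≤ c j} := by
  apply measure_mono
  intro ω hω
  simp only [Set.mem_setOf_eq] at hω ⊢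
  set q : Fin s → ℝ := fun i => p i ω with hq
  set r := numReject c q with hr
  -- r ≠ 0
  have hr0 : r ≠ 0 := by
    intro h0
    rw [FDP, ← hr, if_pos h0] at hω
    exact absurd hω (not_lt.mpr hγ.1)
  -- r belongs to the filter set
  have hne : ((Finset.Icc 1 s).filter (fun j => orderStat q j ≤ c j)).Nonempty := by
    rw [Finset.nonempty_iff_ne_empty]
    intro hemp
    apply hr0
    rw [hr, numReject, hemp, Finset.sup_empty]
    rfl
  obtain ⟨b, hb, hbe⟩ := Finset.exists_mem_eq_sup _ hne (id : ℕ → ℕ)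
  have hrb : r = b := hbe
  rw [Finset.mem_filter, Finset.mem_Icc] at hb
  have hr1 : 1 ≤ r := hrb ▸ hb.1.1
  have hrs : r ≤ s := hrb ▸ hb.1.2
  have hrc : orderStat q r ≤ c r := hrb ▸ hb.2
  -- V := number of rejected true hypotheses
  set V := (rejectedSet c q ∩ I).card with hV
  have hFDP : FDP I c q = (V : ℝ) / (r : ℝ) := by
    rw [FDP, ← hr, if_neg hr0]
  rw [hFDP] at hω
  have hγrV : γ * (r : ℝ) < V := by
    rw [lt_div_iff₀ (by exact_mod_cast Nat.pos_of_ne_zero hr0)] at hω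
    exact hω
  have hfloor : Nat.floor (γ * (r : ℝ)) + 1 ≤ V := by
    have : Nat.floor (γ * (r : ℝ)) < V :=
      (Nat.floor_lt (mul_nonneg hγ.1 (Nat.cast_nonneg _))).mpr hγrV
    omega
  have hVI : V ≤ I.card := Finset.card_le_card (Finset.inter_subset_right)
  -- every rejected index has q-value ≤ orderStat q r
  have hrej : ∀ i ∈ rejectedSet c q, q i ≤ orderStat q r := by
    intro i hi
    rw [rejectedSet, Finset.mem_image] at hi
    obtain ⟨j, hj, rfl⟩ := hi
    rw [Finset.mem_filter] at hj
    have hjr : (j : ℕ) + 1 ≤ r := hj.2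
    have hrn : r - 1 < s := by omega
    rw [orderStat, dif_pos hrn]
    exact Tuple.monotone_sort q (a := j) (b := ⟨r - 1, hrn⟩) (by rw [Fin.le_def]; simp only []; omega)
  -- card of rejectedSet = r
  have hrejcard : (rejectedSet c q).card = r := by
    rw [rejectedSet, Finset.card_image_of_injective _ (Equiv.injective _)]
    have him : (Finset.univ.filter (fun j : Fin s => (j : ℕ) + 1 ≤ numReject c q)).image Fin.val
        = Finset.range r := by
      ext m
      simp only [Finset.mem_image, Finset.mem_filter, Finset.mem_univ, true_and,
        Finset.mem_range, ← hr]
      constructor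
      · rintro ⟨j, hj, rfl⟩; omega
      · intro hm
        exact ⟨⟨m, by omega⟩, by simpa using hm, rfl⟩
    have := congrArg Finset.card him
    rwa [Finset.card_image_of_injective _ Fin.val_injective, Finset.card_range] at this
  -- V ≥ r + I.card - s
  have hVlow : r + I.card - s ≤ V := by
    have h1 : (rejectedSet c q ∩ I).card + (rejectedSet c q \ I).card
        = (rejectedSet c q).card := Finset.card_inter_add_card_sdiff _ _
    rw [hrejcard] at h1
    have h2 : (rejectedSet c q \ I).card ≤ s - I.card := by
      have hsub : rejectedSet c q \ I ⊆ Finset.univ \ I := by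
        intro i hi
        rw [Finset.mem_sdiff] at hi ⊢
        exact ⟨Finset.mem_univ i, hi.2⟩
      have := Finset.card_le_card hsub
      rwa [Finset.card_sdiff_of_subset (Finset.subset_univ I), Finset.card_univ, Fintype.card_fin] at this
    have h3 : I.card ≤ s := by simpa using Finset.card_le_card (Finset.subset_univ I)
    omega
  refine ⟨r, Finset.mem_Icc.mpr ⟨hr1, hrs⟩, by omega, ?_⟩
  -- count true indices with value ≤ c r on the Fin I.card side
  set f : Fin I.card → ℝ := fun j => q (I.orderIsoOfFin rfl j).1 with hf
  have hcard_eq : (Finset.univ.filter (fun j : Fin I.card => f j ≤ c r)).card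
      = (I.filter (fun i => q i ≤ c r)).card := by
    apply Finset.card_bij (fun j _ => ((I.orderIsoOfFin rfl) j).1)
    · intro j hj
      rw [Finset.mem_filter] at hj ⊢
      exact ⟨(I.orderIsoOfFin rfl j).2, hj.2⟩
    · intro a ha b hb hab
      have : (I.orderIsoOfFin rfl a : Fin s) = (I.orderIsoOfFin rfl b : Fin s) := hab
      exact (I.orderIsoOfFin rfl).injective (Subtype.val_injective this)
    · intro i hi
      rw [Finset.mem_filter] at hi
      refine ⟨(I.orderIsoOfFin rfl).symm ⟨i, hi.1⟩, ?_, by simp⟩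
      rw [Finset.mem_filter]
      refine ⟨Finset.mem_univ _, ?_⟩
      show q (I.orderIsoOfFin rfl ((I.orderIsoOfFin rfl).symm ⟨i, hi.1⟩)).1 ≤ c r
      rw [OrderIso.apply_symm_apply]
      exact hi.2
  have hVle : V ≤ (I.filter (fun i => q i ≤ c r)).card := by
    apply Finset.card_le_card
    intro i hi
    rw [Finset.mem_inter] at hi
    rw [Finset.mem_filter]
    exact ⟨hi.2, le_trans (hrej i hi.1) hrc⟩
  have key : max (r + I.card - s) (Nat.floor (γ * (r : ℝ)) + 1)
      ≤ (Finset.univ.filter (fun j : Fin I.card => f j ≤ c r)).card := by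
    rw [hcard_eq]
    have : max (r + I.card - s) (Nat.floor (γ * (r : ℝ)) + 1) ≤ V := by omega
    omega
  exact orderStat_le_of_card f (c r) _ (le_trans (by omega) (le_max_right _ _)) key
end

section
/- (Portmanteau-based asymptotic control, Remark 4.2) Let (X_n) be a sequence of random vectors in [0,1]^t that is tight, and suppose along every subsequence there is a further subsequence converging in distribution to some limit X whose coordinates satisfy P(Xᵢ ≤ u) ≤ u for u ∈ (0,1). Let C = ⋃_{k=1}^{t} {x ∈ [0,1]^t : x₍ₖ₎ ≤ βₖ} for nondecreasing constants 0 ≤ β₁ ≤ ⋯ ≤ βₜ, where x₍ₖ₎ is the k-th smallest coordinate of x. Then limsup_n P(X_n ∈ C) ≤ t·Σ_{k=1}^{t} (βₖ - βₖ₋₁)/k (with β₀ = 0). -/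
/-!
Along any subsequence, pass to a further subsequence converging to some `ν`; since `C` is closed,
the Portmanteau theorem gives `limsup μₙ(C) ≤ ν(C)`, so it suffices to prove Hommel's inequality
`ν(C) ≤ t ∑ₖ (βₖ - βₖ₋₁)/k` for every law `ν` whose coordinates are super-uniform.

For that, weigh the events `{s ≤ βₖ}` by `wₖ = 1/k - 1/(k+1)` (`k < t`) and `w_t = 1/t`. The score
`g(s) = ∑ₖ wₖ 1{s ≤ βₖ}` is at least `1/j` as soon as `s ≤ βⱼ`, because `β` is monotone and the
weights telescope. If `x_(k) ≤ βₖ`, then `k` coordinates of `x` are `≤ βₖ`, so `∑ᵢ g(xᵢ) ≥ 1`.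
Markov's inequality and `ν(xᵢ ≤ βₖ) ≤ βₖ` give `ν(C) ≤ t ∑ₖ wₖ βₖ`, and summation by parts turns
`∑ₖ wₖ βₖ` into `∑ₖ (βₖ - βₖ₋₁)/k`.
-/

open MeasureTheory Finset
open scoped Classical

theorem Monotone.le_iff_lt_card_filter_le {n : ℕ} {α : Type*} [LinearOrder α]
    {f : Fin n → α} (hf : Monotone f) (j : Fin n) (c : α) :
    f j ≤ c ↔ (j : ℕ) < #{i | f i ≤ c} := by
  constructor
  · intro hj
    calc (j : ℕ) < #(Iic j) := by rw [Fin.card_Iic]; omega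
      _ ≤ #{i | f i ≤ c} := card_le_card fun i hi => by
        simpa using (hf (mem_Iic.1 hi)).trans hj
  · intro hcard
    by_contra! hj
    have : ({i | f i ≤ c} : Finset (Fin n)) ⊆ Iio j := fun i hi => by
      simp only [mem_filter, mem_univ, true_and] at hi
      exact mem_Iio.2 (lt_of_not_ge fun hji => (hj.trans_le (hf hji)).not_ge hi)
    simpa using hcard.trans_le (card_le_card this)

theorem orderStat_le_iff {t : ℕ} (x : Fin t → ℝ) (c : ℝ) {k : ℕ} (hk : k ∈ Icc 1 t) :
    orderStat x k ≤ c ↔ k ≤ #{i | x i ≤ c} := by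
  obtain ⟨hk1, hkt⟩ := mem_Icc.1 hk
  have hcard : #{i | (x ∘ Tuple.sort x) i ≤ c} = #{i | x i ≤ c} :=
    card_equiv (Tuple.sort x) (by simp)
  rw [orderStat, dif_pos (by omega), ← Function.comp_apply (f := x),
    (Tuple.monotone_sort x).le_iff_lt_card_filter_le, hcard]
  dsimp only
  omega

theorem isClosed_setOf_le_card_filter_le {ι : Type*} [Fintype ι] (k : ℕ) (c : ℝ) :
    IsClosed {x : ι → ℝ | k ≤ #{i | x i ≤ c}} := by
  have : {x : ι → ℝ | k ≤ #{i | x i ≤ c}} =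
      ⋃ S ∈ {S : Finset ι | k ≤ #S}, ⋂ i ∈ S, {x | x i ≤ c} := by
    ext x
    simp only [Set.mem_ofPred_eq, Set.mem_iUnion, Set.mem_iInter, exists_prop]
    exact ⟨fun h => ⟨_, h, fun i hi => (mem_filter.1 hi).2⟩,
      fun ⟨S, hS, hx⟩ => hS.trans (card_le_card fun i hi => by simpa using hx i hi)⟩
  rw [this]
  exact (Set.toFinite _).isClosed_biUnion fun S _ =>
    isClosed_biInter fun i _ => isClosed_le (continuous_apply i) continuous_const

theorem isClosed_setOf_exists_orderStat_le {t : ℕ} (β : ℕ → ℝ) :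
    IsClosed {x : Fin t → ℝ | ∃ k ∈ Icc 1 t, orderStat x k ≤ β k} := by
  have : {x : Fin t → ℝ | ∃ k ∈ Icc 1 t, orderStat x k ≤ β k} =
      ⋃ k ∈ Icc 1 t, {x | k ≤ #{i | x i ≤ β k}} := by
    ext x
    simp only [Set.mem_ofPred_eq, Set.mem_iUnion, exists_prop]
    exact exists_congr fun k => and_congr_right fun hk => orderStat_le_iff x (β k) hk
  rw [this]
  exact isClosed_biUnion_finset fun k _ => isClosed_setOf_le_card_filter_le k (β k)

theorem sum_Icc_sub_mul_eq_sum_mul_sub {R : Type*} [CommRing R] (h b : ℕ → R) (hb : b 0 = 0)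
    (n : ℕ) :
    ∑ k ∈ Icc 1 n, (h k - h (k + 1)) * b k =
      ∑ k ∈ Icc 1 n, h k * (b k - b (k - 1)) - h (n + 1) * b n := by
  induction n with
  | zero => simp [hb]
  | succ n ih =>
    rw [sum_Icc_succ_top (by omega), sum_Icc_succ_top (by omega), ih, Nat.add_sub_cancel]
    ring

/-- The Hommel weights are `truncInv t k - truncInv t (k + 1)` for `1 ≤ k ≤ t`. -/
noncomputable def truncInv (t k : ℕ) : ℝ := if k ≤ t then (k : ℝ)⁻¹ else 0

theorem truncInv_of_mem {t k : ℕ} (hk : k ∈ Icc 1 t) : truncInv t k = (k : ℝ)⁻¹ :=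
  if_pos (mem_Icc.1 hk).2

theorem truncInv_sub_succ_nonneg (t : ℕ) {k : ℕ} (hk : 1 ≤ k) :
    0 ≤ truncInv t k - truncInv t (k + 1) := by
  rw [sub_nonneg, truncInv, truncInv]
  split_ifs <;> first | omega | positivity | exact inv_anti₀ (by positivity) (by simp)

theorem truncInv_succ_self (t : ℕ) : truncInv t (t + 1) = 0 := if_neg (by omega)

theorem sum_Icc_truncInv_sub {t j : ℕ} (hj : j ≤ t) :
    ∑ k ∈ Icc j t, (truncInv t k - truncInv t (k + 1)) = truncInv t j := by
  have := sum_Icc_sub hj (fun k => -truncInv t k)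
  simp only [neg_sub_neg, truncInv_succ_self] at this
  linarith

noncomputable def hommelScore (t : ℕ) (β : ℕ → ℝ) (s : ℝ) : ℝ :=
  ∑ k ∈ Icc 1 t, (truncInv t k - truncInv t (k + 1)) * (Set.Iic (β k)).indicator 1 s

theorem hommelScore_nonneg (t : ℕ) (β : ℕ → ℝ) (s : ℝ) : 0 ≤ hommelScore t β s :=
  sum_nonneg fun _ hk => mul_nonneg (truncInv_sub_succ_nonneg t (mem_Icc.1 hk).1)
    (Set.indicator_nonneg (fun _ _ => zero_le_one) s)

theorem inv_le_hommelScore {t : ℕ} {β : ℕ → ℝ} (hβ : ∀ i j, i ≤ j → j ≤ t → β i ≤ β j)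
    {j : ℕ} (hj : j ∈ Icc 1 t) {s : ℝ} (hs : s ≤ β j) : (j : ℝ)⁻¹ ≤ hommelScore t β s := by
  obtain ⟨hj1, hjt⟩ := mem_Icc.1 hj
  calc (j : ℝ)⁻¹ = ∑ k ∈ Icc j t, (truncInv t k - truncInv t (k + 1)) := by
        rw [sum_Icc_truncInv_sub hjt, truncInv_of_mem hj]
    _ = ∑ k ∈ Icc j t, (truncInv t k - truncInv t (k + 1)) * (Set.Iic (β k)).indicator 1 s :=
        sum_congr rfl fun k hk => by
          have hsk : s ≤ β k := hs.trans (hβ j k (mem_Icc.1 hk).1 (mem_Icc.1 hk).2)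
          rw [Set.indicator_of_mem (Set.mem_Iic.2 hsk), Pi.one_apply, mul_one]
    _ ≤ hommelScore t β s :=
        sum_le_sum_of_subset_of_nonneg (Icc_subset_Icc_left hj1) fun k hk _ =>
          mul_nonneg (truncInv_sub_succ_nonneg t (mem_Icc.1 hk).1)
            (Set.indicator_nonneg (fun _ _ => zero_le_one) s)

theorem measureReal_le_of_forall_Ioo {α : Type*} [MeasurableSpace α] {μ : Measure α}
    [IsProbabilityMeasure μ] {f : α → ℝ}
    (hf : ∀ u ∈ Set.Ioo (0 : ℝ) 1, μ {x | f x ≤ u} ≤ ENNReal.ofReal u) {u : ℝ} (hu : 0 ≤ u) :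
    μ.real {x | f x ≤ u} ≤ u := by
  refine ENNReal.toReal_le_of_le_ofReal hu ?_
  rcases lt_or_ge u 1 with hu1 | hu1
  · have hlim := (ENNReal.continuous_ofReal.tendsto u).mono_left
      (nhdsWithin_le_nhds (s := Set.Ioi u))
    refine ge_of_tendsto hlim ?_
    filter_upwards [Ioo_mem_nhdsGT hu1] with v hv
    exact (measure_mono fun x hx => hx.trans hv.1.le).trans (hf v ⟨hu.trans_lt hv.1, hv.2⟩)
  · exact prob_le_one.trans (ENNReal.one_le_ofReal.2 hu1)

theorem integrable_hommelScore_apply {t : ℕ} (ν : Measure (Fin t → ℝ)) [IsFiniteMeasure ν]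
    (β : ℕ → ℝ) (i : Fin t) : Integrable (fun x => hommelScore t β (x i)) ν := by
  unfold hommelScore
  exact integrable_finsetSum _ fun k _ => ((integrable_const 1).indicator
    (measurableSet_le (measurable_pi_apply i) measurable_const)).const_mul _

theorem integral_hommelScore {t : ℕ} (ν : Measure (Fin t → ℝ)) [IsFiniteMeasure ν] (β : ℕ → ℝ)
    (i : Fin t) :
    ∫ x, hommelScore t β (x i) ∂ν =
      ∑ k ∈ Icc 1 t, (truncInv t k - truncInv t (k + 1)) * ν.real {x | x i ≤ β k} := by
  have hmeas : ∀ k, MeasurableSet {x : Fin t → ℝ | x i ≤ β k} :=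
    fun k => measurableSet_le (measurable_pi_apply i) measurable_const
  unfold hommelScore
  rw [integral_finsetSum]
  · refine sum_congr rfl fun k _ => ?_
    rw [integral_const_mul]
    exact congrArg _ (integral_indicator_one (hmeas k))
  · exact fun k _ => ((integrable_const 1).indicator (hmeas k)).const_mul _

theorem one_le_sum_hommelScore {t : ℕ} {β : ℕ → ℝ} (hβ : ∀ i j, i ≤ j → j ≤ t → β i ≤ β j)
    {x : Fin t → ℝ} (hx : ∃ k ∈ Icc 1 t, orderStat x k ≤ β k) :
    1 ≤ ∑ i, hommelScore t β (x i) := by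
  obtain ⟨k, hk, hxk⟩ := hx
  have hk0 : (0 : ℝ) < k := by exact_mod_cast (mem_Icc.1 hk).1
  calc 1 ≤ (#{i | x i ≤ β k} : ℝ) * (k : ℝ)⁻¹ := by
        rw [le_mul_inv_iff₀ hk0, one_mul]
        exact_mod_cast (orderStat_le_iff x (β k) hk).1 hxk
    _ = ∑ i ∈ {i | x i ≤ β k}, (k : ℝ)⁻¹ := by rw [sum_const, nsmul_eq_mul]
    _ ≤ ∑ i ∈ {i | x i ≤ β k}, hommelScore t β (x i) :=
        sum_le_sum fun i hi => inv_le_hommelScore hβ hk (mem_filter.1 hi).2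
    _ ≤ ∑ i, hommelScore t β (x i) :=
        sum_le_sum_of_subset_of_nonneg (subset_univ _) fun i _ _ => hommelScore_nonneg t β _

theorem hommel_bound {t : ℕ} (ν : Measure (Fin t → ℝ)) [IsProbabilityMeasure ν]
    (hν : ∀ i : Fin t, ∀ u ∈ Set.Ioo (0 : ℝ) 1, ν {x | x i ≤ u} ≤ ENNReal.ofReal u)
    (β : ℕ → ℝ) (hβ0 : β 0 = 0) (hβ : ∀ i j, i ≤ j → j ≤ t → β i ≤ β j) :
    ν.real {x | ∃ k ∈ Icc 1 t, orderStat x k ≤ β k} ≤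
      t * ∑ k ∈ Icc 1 t, (β k - β (k - 1)) / k := by
  have hscore : Integrable (fun x => ∑ i, hommelScore t β (x i)) ν :=
    integrable_finsetSum _ fun i _ => integrable_hommelScore_apply ν β i
  calc ν.real {x | ∃ k ∈ Icc 1 t, orderStat x k ≤ β k}
      ≤ ν.real {x | 1 ≤ ∑ i, hommelScore t β (x i)} :=
        measureReal_mono fun x hx => one_le_sum_hommelScore hβ hx
    _ ≤ ∫ x, ∑ i, hommelScore t β (x i) ∂ν := by
        simpa using mul_meas_ge_le_integral_of_nonneg
          (ae_of_all _ fun x => sum_nonneg fun i _ => hommelScore_nonneg t β (x i)) hscore 1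
    _ = ∑ i : Fin t, ∑ k ∈ Icc 1 t,
          (truncInv t k - truncInv t (k + 1)) * ν.real {x | x i ≤ β k} := by
        rw [integral_finsetSum _ fun i _ => integrable_hommelScore_apply ν β i]
        exact sum_congr rfl fun i _ => integral_hommelScore ν β i
    _ ≤ ∑ _i : Fin t, ∑ k ∈ Icc 1 t, (truncInv t k - truncInv t (k + 1)) * β k := by
        gcongr with i _ k hk
        · exact truncInv_sub_succ_nonneg t (mem_Icc.1 hk).1
        · exact measureReal_le_of_forall_Ioo (hν i) (hβ0 ▸ hβ 0 k k.zero_le (mem_Icc.1 hk).2)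
    _ = t * ∑ k ∈ Icc 1 t, (β k - β (k - 1)) / k := by
        rw [sum_const, card_univ, Fintype.card_fin, nsmul_eq_mul,
          sum_Icc_sub_mul_eq_sum_mul_sub _ _ hβ0, truncInv_succ_self, zero_mul, sub_zero]
        congr 1
        refine sum_congr rfl fun k hk => ?_
        rw [truncInv_of_mem hk, inv_mul_eq_div]

theorem Filter.limsup_le_of_forall_strictMono_exists_lt {α : Type*}
    [ConditionallyCompleteLinearOrder α] [DenselyOrdered α] {u : ℕ → α} {a : α}
    (hu : IsCoboundedUnder (· ≤ ·) atTop u)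
    (h : ∀ φ : ℕ → ℕ, StrictMono φ → ∀ b, a < b → ∃ n, u (φ n) < b) :
    limsup u atTop ≤ a := by
  refine le_of_forall_gt_imp_ge_of_dense fun b hb => limsup_le_of_le hu ?_
  by_contra hfreq
  obtain ⟨φ, hφ, hφb⟩ := extraction_of_frequently_atTop (not_eventually.1 hfreq)
  obtain ⟨n, hn⟩ := h φ hφ b hb
  exact hφb n hn.le

theorem stmt18_general {t : ℕ} (μs : ℕ → ProbabilityMeasure (Fin t → ℝ))
    (htight : ∀ φ : ℕ → ℕ, StrictMono φ →
      ∃ ψ : ℕ → ℕ, StrictMono ψ ∧ ∃ ν : ProbabilityMeasure (Fin t → ℝ),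
        Filter.Tendsto (fun n => μs (φ (ψ n))) Filter.atTop (nhds ν) ∧
        ∀ i : Fin t, ∀ u ∈ Set.Ioo (0 : ℝ) 1,
          (ν : Measure (Fin t → ℝ)) {x | x i ≤ u} ≤ ENNReal.ofReal u)
    (β : ℕ → ℝ) (hβ0 : β 0 = 0) (hβmono : ∀ i j, i ≤ j → j ≤ t → β i ≤ β j) :
    Filter.limsup
      (fun n => ((μs n : Measure (Fin t → ℝ))
        {x | (∀ i, x i ∈ Set.Icc (0 : ℝ) 1) ∧ ∃ k ∈ Finset.Icc 1 t, orderStat x k ≤ β k}).toReal)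
      Filter.atTop ≤
      t * ∑ k ∈ Finset.Icc 1 t, (β k - β (k - 1)) / k := by
  have hcube : IsClosed {x : Fin t → ℝ | ∀ i, x i ∈ Set.Icc (0 : ℝ) 1} := by
    simp only [Set.ofPred_forall]
    exact isClosed_iInter fun i => isClosed_Icc.preimage (continuous_apply i)
  have hC : IsClosed
      {x : Fin t → ℝ | (∀ i, x i ∈ Set.Icc (0 : ℝ) 1) ∧ ∃ k ∈ Icc 1 t, orderStat x k ≤ β k} :=
    hcube.inter (isClosed_setOf_exists_orderStat_le β)
  refine Filter.limsup_le_of_forall_strictMono_exists_lt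
    (Filter.isCoboundedUnder_le_of_le _ fun n => ENNReal.toReal_nonneg) fun φ hφ b hb => ?_
  obtain ⟨ψ, -, ν, hconv, hν⟩ := htight φ hφ
  have hνC : (ν : Measure (Fin t → ℝ))
      {x | (∀ i, x i ∈ Set.Icc (0 : ℝ) 1) ∧ ∃ k ∈ Icc 1 t, orderStat x k ≤ β k} <
        ENNReal.ofReal b := by
    rw [ENNReal.lt_ofReal_iff_toReal_lt (measure_ne_top _ _)]
    exact ((measureReal_mono (Set.ofPred_subset_ofPred.2 fun _ => And.right)).trans
      (hommel_bound ν hν β hβ0 hβmono)).trans_lt hb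
  obtain ⟨n, hn⟩ := (Filter.eventually_lt_of_limsup_lt
    ((ProbabilityMeasure.limsup_measure_closed_le_of_tendsto hconv hC).trans_lt hνC)).exists
  exact ⟨ψ n, (ENNReal.lt_ofReal_iff_toReal_lt (measure_ne_top _ _)).1 hn⟩

/-- Remark 4.2 (Portmanteau-based asymptotic bound): if the laws `μs n` of a
sequence of random vectors live on `[0,1]^t` and every subsequence has a further
subsequence converging weakly to a limit whose coordinates satisfy the p-value
property, then `limsup_n P(X_n ∈ C) ≤ t·∑_{k=1}^t (β_k - β_{k-1})/k` for the
closed set `C = ⋃_{k=1}^t {x ∈ [0,1]^t : x_(k) ≤ β_k}`. -/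
theorem stmt18 {t : ℕ} (μs : ℕ → ProbabilityMeasure (Fin t → ℝ))
    (hsupp : ∀ n, (μs n : Measure (Fin t → ℝ)) {x | ∀ i, x i ∈ Set.Icc (0 : ℝ) 1} = 1)
    (htight : ∀ φ : ℕ → ℕ, StrictMono φ →
      ∃ ψ : ℕ → ℕ, StrictMono ψ ∧ ∃ ν : ProbabilityMeasure (Fin t → ℝ),
        Filter.Tendsto (fun n => μs (φ (ψ n))) Filter.atTop (nhds ν) ∧
        ∀ i : Fin t, ∀ u ∈ Set.Ioo (0 : ℝ) 1,
          (ν : Measure (Fin t → ℝ)) {x | x i ≤ u} ≤ ENNReal.ofReal u)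
    (β : ℕ → ℝ) (hβ0 : β 0 = 0) (hβmono : ∀ i j, i ≤ j → j ≤ t → β i ≤ β j)
    (hβ1 : β t ≤ 1) :
    Filter.limsup
      (fun n => ((μs n : Measure (Fin t → ℝ))
        {x | (∀ i, x i ∈ Set.Icc (0 : ℝ) 1) ∧ ∃ k ∈ Finset.Icc 1 t, orderStat x k ≤ β k}).toReal)
      Filter.atTop ≤
      t * ∑ k ∈ Finset.Icc 1 t, (β k - β (k - 1)) / k :=
  stmt18_general μs htight β hβ0 hβmono
end
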